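/- arXiv:1707.05588 — 2 statements merged into one kernel-verified Lean document; each statement's English description precedes it below -/
import Mathlib

section
/- Suppose AW_k = V_k U_k with V_k ∈ ℂ^{n×k} orthonormal columns and U_k upper triangular invertible. For a shift α ∈ ℂ, the orthogonality condition V_k^H (b - (A+αI)(x_0(α) + W_k y)) = 0 holds if and only if y solves the k×k linear system (U_k + α V_k^H W_k) y = V_k^H r_0(α), where r_0(α) = b - (A+αI)x_0(α), provided U_k + α V_k^H W_k is invertible. -/
open Matrix

/-- Characterization of the shifted projected system in flexible Simpler GMRES:
the Galerkin condition for the shifted system holds iff y solves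
(Uₖ + α Vₖᴴ Wₖ) y = Vₖᴴ r₀(α). -/
theorem shifted_projected_system (n k : ℕ)
    (A : Matrix (Fin n) (Fin n) ℂ)
    (W V : Matrix (Fin n) (Fin k) ℂ) (U : Matrix (Fin k) (Fin k) ℂ)
    (hV : Vᴴ * V = 1) (hUtri : U.BlockTriangular id) (hU : IsUnit U.det)
    (hAW : A * W = V * U)
    (α : ℂ) (hinv : IsUnit (U + α • (Vᴴ * W)).det)
    (b x0 r0 : Fin n → ℂ) (y : Fin k → ℂ)
    (hr0 : r0 = b - (A + α • (1 : Matrix (Fin n) (Fin n) ℂ)) *ᵥ x0) :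
    Vᴴ *ᵥ (b - (A + α • (1 : Matrix (Fin n) (Fin n) ℂ)) *ᵥ (x0 + W *ᵥ y)) = 0 ↔
      (U + α • (Vᴴ * W)) *ᵥ y = Vᴴ *ᵥ r0 := by
  have h1 : Vᴴ * ((A + α • (1 : Matrix (Fin n) (Fin n) ℂ)) * W) = U + α • (Vᴴ * W) := by
    simp [Matrix.add_mul, Matrix.mul_add, hAW, ← Matrix.mul_assoc, hV, Matrix.mul_smul,
      Matrix.smul_mul]
  have h2 : Vᴴ *ᵥ (b - (A + α • (1 : Matrix (Fin n) (Fin n) ℂ)) *ᵥ (x0 + W *ᵥ y))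
      = Vᴴ *ᵥ r0 - (U + α • (Vᴴ * W)) *ᵥ y := by
    simp only [hr0, Matrix.mulVec_add, Matrix.mulVec_sub, Matrix.mulVec_mulVec,
      Matrix.mul_assoc, h1]
    abel
  rw [h2, sub_eq_zero, eq_comm]
end

section
/- Under the relation AW_k = V_k U_k, if y_k(α) solves (U_k + α V_k^H W_k) y_k(α) = V_k^H r_0(α) and x_k(α) = x_0(α) + W_k y_k(α), then the shifted residual r_k(α) = b - (A+αI)x_k(α) equals r_0(α) - (V_k U_k + α W_k) y_k(α) and satisfies V_k^H r_k(α) = 0. -/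
open Matrix

/-- Shifted residual formula and orthogonality in flexible Simpler GMRES:
r_k(α) = r₀(α) - (Vₖ Uₖ + α Wₖ) y_k(α) and Vₖᴴ r_k(α) = 0. -/
theorem shifted_residual_formula (n k : ℕ)
    (A : Matrix (Fin n) (Fin n) ℂ)
    (W V : Matrix (Fin n) (Fin k) ℂ) (U : Matrix (Fin k) (Fin k) ℂ)
    (hV : Vᴴ * V = 1)
    (hAW : A * W = V * U)
    (α : ℂ) (b x0 r0 xk rk : Fin n → ℂ) (y : Fin k → ℂ)
    (hr0 : r0 = b - (A + α • (1 : Matrix (Fin n) (Fin n) ℂ)) *ᵥ x0)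
    (hy : (U + α • (Vᴴ * W)) *ᵥ y = Vᴴ *ᵥ r0)
    (hx : xk = x0 + W *ᵥ y)
    (hrk : rk = b - (A + α • (1 : Matrix (Fin n) (Fin n) ℂ)) *ᵥ xk) :
    rk = r0 - (V * U + α • W) *ᵥ y ∧ Vᴴ *ᵥ rk = 0 := by
  have h1 : rk = r0 - (V * U + α • W) *ᵥ y := by
    subst hr0 hx hrk
    have : (A + α • (1 : Matrix (Fin n) (Fin n) ℂ)) * W = V * U + α • W := by
      rw [Matrix.add_mul, hAW, Matrix.smul_mul, Matrix.one_mul]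
    rw [← this]
    simp [mulVec_add, ← mulVec_mulVec]
    abel
  refine ⟨h1, ?_⟩
  rw [h1, mulVec_sub, mulVec_mulVec, ← hy]
  rw [Matrix.mul_add, ← Matrix.mul_assoc Vᴴ V U, hV, Matrix.one_mul, Matrix.mul_smul]
  simp [mulVec_add]
end
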